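/- Let F ∈ ℝ^{K×d}, let Γ ∈ ℝ^{K×K} be symmetric positive definite, let y ∈ ℝ^K, and define E(x) := ½ |Γ^{−1/2}(y − Fx)|² for x ∈ ℝ^d. For an ensemble x¹, …, x^N ∈ ℝ^d with mean x̄ := (1/N) Σ_i x^i, define C := (1/N) Σ_{i=1}^N (x^i − x̄) ⊗ (Fx^i − F x̄) ∈ ℝ^{d×K} and C̄ := (1/N) Σ_{i=1}^N (x^i − x̄) ⊗ (x^i − x̄) ∈ ℝ^{d×d}. Then for every j ∈ {1, …, N}: C Γ^{−1} (y − F x^j) = − C̄ ∇E(x^j). -/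

import Mathlib

open Matrix


/-- Euclidean gradient of a function on `ℝ^d`. -/
noncomputable def euclideanGradient {d : ℕ} (E : (Fin d → ℝ) → ℝ) (x : Fin d → ℝ) :
    Fin d → ℝ :=
  WithLp.equiv 2 (Fin d → ℝ)
    (gradient (fun z : EuclideanSpace ℝ (Fin d) => E (WithLp.equiv 2 (Fin d → ℝ) z))
      ((WithLp.equiv 2 (Fin d → ℝ)).symm x))

/-- Euclidean norm of a vector in `ℝ^K`. -/
noncomputable def euclideanNorm {K : ℕ} (v : Fin K → ℝ) : ℝ :=
  ‖(WithLp.equiv 2 (Fin K → ℝ)).symm v‖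

section
open scoped ComplexOrder

/-- The square root of a positive semidefinite matrix (the definition of
`Matrix.PosSemidef.sqrt` in the older Mathlib, which has since been removed). -/
noncomputable def Matrix.PosSemidef.sqrt {n 𝕜 : Type*} [Fintype n] [DecidableEq n] [RCLike 𝕜]
    {A : Matrix n n 𝕜} (hA : A.PosSemidef) : Matrix n n 𝕜 :=
  hA.1.eigenvectorUnitary.1 * diagonal ((↑) ∘ (√·) ∘ hA.1.eigenvalues) *
    (star hA.1.eigenvectorUnitary : Matrix n n 𝕜)

end

open scoped ComplexOrder in
lemma Matrix.PosSemidef.isHermitian_sqrt {n 𝕜 : Type*} [Fintype n] [DecidableEq n] [RCLike 𝕜]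
    {A : Matrix n n 𝕜} (hA : A.PosSemidef) : hA.sqrt.IsHermitian := by
  unfold Matrix.IsHermitian Matrix.PosSemidef.sqrt
  simp [Matrix.conjTranspose_mul, Matrix.mul_assoc, Matrix.diagonal_conjTranspose]
  rw [Matrix.star_eq_conjTranspose, Matrix.conjTranspose_conjTranspose,
    ← Matrix.star_eq_conjTranspose]
  congr 3
  ext i
  simp [RCLike.conj_ofReal]

open scoped ComplexOrder in
lemma Matrix.PosSemidef.sqrt_mul_self {n 𝕜 : Type*} [Fintype n] [DecidableEq n] [RCLike 𝕜]
    {A : Matrix n n 𝕜} (hA : A.PosSemidef) : hA.sqrt * hA.sqrt = A := by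
  have hU := Unitary.coe_star_mul_self hA.1.eigenvectorUnitary
  conv_rhs => rw [hA.1.spectral_theorem, Unitary.conjStarAlgAut_apply]
  unfold Matrix.PosSemidef.sqrt
  calc _ = (hA.1.eigenvectorUnitary : Matrix n n 𝕜) *
        (diagonal ((↑) ∘ (√·) ∘ hA.1.eigenvalues) *
          ((star hA.1.eigenvectorUnitary : Matrix n n 𝕜) * (hA.1.eigenvectorUnitary : Matrix n n 𝕜)) *
          diagonal ((↑) ∘ (√·) ∘ hA.1.eigenvalues)) *
        (star hA.1.eigenvectorUnitary : Matrix n n 𝕜) := by simp only [Matrix.mul_assoc]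
    _ = _ := by
      rw [hU, Matrix.mul_one, diagonal_mul_diagonal]
      congr 3
      ext i
      simp only [Function.comp_apply, ← RCLike.ofReal_mul,
        Real.mul_self_sqrt (hA.eigenvalues_nonneg i)]

lemma hasGradientAt_half_norm_sq {E F : Type*} [NormedAddCommGroup E]
    [InnerProductSpace ℝ E] [CompleteSpace E] [NormedAddCommGroup F]
    [InnerProductSpace ℝ F] [CompleteSpace F]
    (L : E →L[ℝ] F) (L' : F →L[ℝ] E)
    (hL : ∀ v w, inner ℝ (L' v) w = (inner ℝ v (L w) : ℝ)) (b : F) (z : E) :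
    HasGradientAt (fun z => (1/2 : ℝ) * ‖b - L z‖^2) (-(L' (b - L z))) z := by
  have hu : HasFDerivAt (fun z : E => b - L z) (-L) z := by
    exact ((hasFDerivAt_const b z).sub L.hasFDerivAt).congr_fderiv (zero_sub _)
  have h2 := (hu.inner ℝ hu).const_mul (1/2 : ℝ)
  rw [hasGradientAt_iff_hasFDerivAt]
  have : (fun z : E => (1/2 : ℝ) * ‖b - L z‖^2)
      = fun z : E => (1/2 : ℝ) * (inner ℝ (b - L z) (b - L z) : ℝ) := by
    funext w; rw [real_inner_self_eq_norm_sq]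
  rw [this]
  convert h2 using 1
  · ext; simp
  ext h
  simp [fderivInnerCLM, hL]
  simp only [inner_sub_left, inner_sub_right, real_inner_comm b (L h),
    real_inner_comm (L z) (L h)]
  ring

lemma vecMulVec_mulVec_eq {d K : ℕ} (a : Fin d → ℝ) (F : Matrix (Fin K) (Fin d) ℝ)
    (w : Fin d → ℝ) : vecMulVec a (F.mulVec w) = vecMulVec a w * Fᵀ := by
  ext i k
  simp [vecMulVec_apply, Matrix.mul_apply, Matrix.mulVec, dotProduct, Finset.mul_sum]
  exact Finset.sum_congr rfl fun l _ => by ring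

/-- In the linear case, the (derivative-free) Ensemble Kalman Filter drift
`C Γ⁻¹ (y − F x^j)` coincides with the covariance-preconditioned gradient descent
direction `− C̄ ∇E(x^j)` for the weighted least-squares functional
`E(x) = ½ |Γ^{−1/2}(y − Fx)|²`. -/
theorem enkf_preconditioned_gradient_flow {d K N : ℕ} (hN : 0 < N)
    (F : Matrix (Fin K) (Fin d) ℝ) (Γ : Matrix (Fin K) (Fin K) ℝ) (hΓ : Γ.PosDef)
    (y : Fin K → ℝ)
    (E : (Fin d → ℝ) → ℝ)
    (hE : ∀ x, E x = (1 / 2) * euclideanNorm ((hΓ.posSemidef.sqrt)⁻¹.mulVec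
      (y - F.mulVec x)) ^ 2)
    (x : Fin N → (Fin d → ℝ))
    (xbar : Fin d → ℝ) (hxbar : xbar = (N : ℝ)⁻¹ • ∑ i : Fin N, x i)
    (C : Matrix (Fin d) (Fin K) ℝ)
    (hC : C = (N : ℝ)⁻¹ •
      ∑ i : Fin N, vecMulVec (x i - xbar) (F.mulVec (x i) - F.mulVec xbar))
    (Cbar : Matrix (Fin d) (Fin d) ℝ)
    (hCbar : Cbar = (N : ℝ)⁻¹ • ∑ i : Fin N, vecMulVec (x i - xbar) (x i - xbar))
    (j : Fin N) :
    C.mulVec (Γ⁻¹.mulVec (y - F.mulVec (x j)))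
      = -(Cbar.mulVec (euclideanGradient E (x j))) := by
  set S := hΓ.posSemidef.sqrt with hS
  set A := S⁻¹ with hA
  set M := A * F with hM
  -- properties of A
  have hSsymm : Sᵀ = S := by
    have := hΓ.posSemidef.isHermitian_sqrt
    rw [← Matrix.conjTranspose_eq_transpose_of_trivial, this]
  have hAsymm : Aᵀ = A := by rw [hA, Matrix.transpose_nonsing_inv, hSsymm]
  have hAA : A * A = Γ⁻¹ := by
    rw [hA, ← Matrix.mul_inv_rev, hΓ.posSemidef.sqrt_mul_self]
  -- the CLMs
  set L : EuclideanSpace ℝ (Fin d) →L[ℝ] EuclideanSpace ℝ (Fin K) :=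
    LinearMap.toContinuousLinearMap (Matrix.toEuclideanLin M) with hL
  set L' : EuclideanSpace ℝ (Fin K) →L[ℝ] EuclideanSpace ℝ (Fin d) :=
    LinearMap.toContinuousLinearMap (Matrix.toEuclideanLin Mᵀ) with hL'
  have hadj : ∀ v w, inner ℝ (L' v) w = (inner ℝ v (L w) : ℝ) := by
    intro v w
    have : (Mᵀ.mulVec (WithLp.equiv 2 (Fin K → ℝ) v)) ⬝ᵥ (WithLp.equiv 2 (Fin d → ℝ) w)
        = (WithLp.equiv 2 (Fin K → ℝ) v) ⬝ᵥ (M.mulVec (WithLp.equiv 2 (Fin d → ℝ) w)) := by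
      rw [Matrix.mulVec_transpose, Matrix.dotProduct_mulVec]
    simpa [hL, hL', PiLp.inner_apply, Matrix.toEuclideanLin_apply, dotProduct, mul_comm] using this
  set b : EuclideanSpace ℝ (Fin K) := (WithLp.equiv 2 (Fin K → ℝ)).symm (A.mulVec y) with hb
  set z₀ : EuclideanSpace ℝ (Fin d) := (WithLp.equiv 2 (Fin d → ℝ)).symm (x j) with hz₀
  -- the function in the gradient
  have hfun : (fun z : EuclideanSpace ℝ (Fin d) => E (WithLp.equiv 2 (Fin d → ℝ) z))
      = fun z => (1/2 : ℝ) * ‖b - L z‖^2 := by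
    funext z
    rw [hE]
    congr 1
    rw [euclideanNorm]
    congr 1
    rw [hb, hL]
    simp only [Matrix.mulVec_sub, LinearMap.coe_toContinuousLinearMap',
      Matrix.toEuclideanLin_apply, hM, ← Matrix.mulVec_mulVec]
    rfl
  have hgrad := (hasGradientAt_half_norm_sq L L' hadj b z₀).gradient
  have hkey : euclideanGradient E (x j)
      = -(Fᵀ.mulVec (Γ⁻¹.mulVec (y - F.mulVec (x j)))) := by
    rw [euclideanGradient, hfun, ← hz₀, hgrad]
    have h1 : WithLp.equiv 2 (Fin d → ℝ) (L' (b - L z₀))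
        = Mᵀ.mulVec (A.mulVec y - M.mulVec (x j)) := by
      rw [hL']
      simp only [LinearMap.coe_toContinuousLinearMap', Matrix.toEuclideanLin_apply]
      simp [hb, hL, hz₀, Matrix.toEuclideanLin_apply]
    have h2 : Mᵀ.mulVec (A.mulVec y - M.mulVec (x j))
        = Fᵀ.mulVec (Γ⁻¹.mulVec (y - F.mulVec (x j))) := by
      rw [hM, Matrix.transpose_mul, hAsymm, ← Matrix.mulVec_mulVec, ← hAA,
        ← Matrix.mulVec_mulVec]
      congr 1
      simp [Matrix.mulVec_sub, Matrix.mulVec_mulVec, Matrix.mul_assoc]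
    rw [← h2, ← h1]
    rfl
  -- C = Cbar * Fᵀ
  have hCF : C = Cbar * Fᵀ := by
    rw [hC, hCbar, Matrix.smul_mul]
    congr 1
    rw [Matrix.sum_mul]
    refine Finset.sum_congr rfl fun i _ => ?_
    rw [← Matrix.mulVec_sub, vecMulVec_mulVec_eq]
  rw [hkey, hCF, Matrix.mulVec_neg, neg_neg, ← Matrix.mulVec_mulVec]
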